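/- For every trace-free 2×2 complex matrix Φ (i.e. Φ ∈ Matrix (Fin 2) (Fin 2) ℂ with tr Φ = 0), the Frobenius norm of Φ satisfies the inequality ‖Φ‖⁴ ≤ 4·|det Φ|² + ‖[Φ, Φᴴ]‖². -/

import Mathlib

open Matrix

attribute [local instance] Matrix.frobeniusNormedAddCommGroup

/-!
For trace-free `2 × 2` matrices the inequality comes from an identity,
`2 ‖Φ‖⁴ = 8 |det Φ|² + ‖⁅Φ, Φᴴ⁆‖²`. Writing `Φ = !![a, b; c, -a]` and `|z|² = z z̄`, both sides
become the same polynomial in `a, b, c` and their conjugates.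
-/

theorem Matrix.frobenius_norm_sq {m n α : Type*} [Fintype m] [Fintype n]
    [NormedAddCommGroup α] (A : Matrix m n α) :
    ‖A‖ ^ 2 = ∑ i, ∑ j, ‖A i j‖ ^ 2 := by
  rw [frobenius_norm_def, ← Real.rpow_natCast, ← Real.rpow_mul (by positivity)]
  norm_num

theorem Matrix.frobenius_norm_sq_fin_two {α : Type*} [NormedAddCommGroup α]
    (A : Matrix (Fin 2) (Fin 2) α) :
    ‖A‖ ^ 2 = ‖A 0 0‖ ^ 2 + ‖A 0 1‖ ^ 2 + ‖A 1 0‖ ^ 2 + ‖A 1 1‖ ^ 2 := by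
  simp only [frobenius_norm_sq, Fin.sum_univ_two, add_assoc]

theorem Matrix.two_mul_frobenius_norm_pow_four_of_trace_eq_zero {𝕜 : Type*} [RCLike 𝕜]
    (Φ : Matrix (Fin 2) (Fin 2) 𝕜) (hΦ : Φ.trace = 0) :
    2 * ‖Φ‖ ^ 4 = 8 * ‖Φ.det‖ ^ 2 + ‖⁅Φ, Φᴴ⁆‖ ^ 2 := by
  have h11 : Φ 1 1 = -Φ 0 0 := by
    rw [trace_fin_two] at hΦ
    linear_combination hΦ
  rw [show ‖Φ‖ ^ 4 = (‖Φ‖ ^ 2) ^ 2 by ring, frobenius_norm_sq_fin_two,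
    frobenius_norm_sq_fin_two ⁅Φ, Φᴴ⁆]
  apply RCLike.ofReal_injective (K := 𝕜)
  push_cast
  simp only [← RCLike.mul_conj, Ring.lie_def, Matrix.sub_apply, mul_apply, Fin.sum_univ_two,
    conjTranspose_apply, det_fin_two, h11, RCLike.star_def, map_sub, map_add, map_mul, map_neg,
    RCLike.conj_conj]
  ring

/-- For every trace-free `2 × 2` complex matrix `Φ`, the Frobenius norm of `Φ` satisfies
`‖Φ‖⁴ ≤ 4 * |det Φ|² + ‖⁅Φ, Φᴴ⁆‖²`, where `Φᴴ` is the conjugate transpose and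
`⁅A, B⁆ = A * B - B * A` is the commutator. -/
theorem stmt0 (Φ : Matrix (Fin 2) (Fin 2) ℂ) (hΦ : Φ.trace = 0) :
    ‖Φ‖ ^ 4 ≤ 4 * ‖Φ.det‖ ^ 2 + ‖⁅Φ, Φᴴ⁆‖ ^ 2 := by
  have identity := two_mul_frobenius_norm_pow_four_of_trace_eq_zero Φ hΦ
  linarith [sq_nonneg ‖⁅Φ, Φᴴ⁆‖]
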